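/- Let k ≥ 0 and t ≥ 1 be integers, let s ∈ {0,1,2}, let G be a graph, and let γ be a drawing of G with at most k crossings which contains an s-nest of size (k+1)(t−1)+1. Then γ has a clean s-nest of size t. -/

import Mathlib

open Set Bornology

noncomputable section

namespace CrossingPaper

/-- Points of the plane. -/
abbrev Plane : Type := ℝ × ℝ

/-- A drawing of a (simple) graph `G` in the plane: each vertex is mapped to a point
(injectively), and each edge `e = uv` is mapped to an arc with ends `vmap u`, `vmap v`
whose interior `emap e` avoids all vertex images; any two distinct edges intersect in
finitely many points. -/
structure Drawing {V : Type} (G : SimpleGraph V) where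
  vmap : V → Plane
  emap : Sym2 V → Set Plane
  vmap_inj : Function.Injective vmap
  arc : ∀ e ∈ G.edgeSet, ∀ u v : V, e = s(u, v) →
    ∃ f : ℝ → Plane, ContinuousOn f (Icc 0 1) ∧ InjOn f (Icc 0 1) ∧
      f 0 = vmap u ∧ f 1 = vmap v ∧ emap e = f '' Ioo 0 1
  avoid : ∀ e ∈ G.edgeSet, ∀ v : V, vmap v ∉ emap e
  finite_inter : ∀ e ∈ G.edgeSet, ∀ e' ∈ G.edgeSet, e ≠ e' → (emap e ∩ emap e').Finite

variable {V : Type} {G : SimpleGraph V}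

/-- The set of crossings of a drawing: points lying on (the interiors of) two distinct
edges. -/
def Drawing.crossings (γ : Drawing G) : Set Plane :=
  {p | ∃ e ∈ G.edgeSet, ∃ e' ∈ G.edgeSet, e ≠ e' ∧ p ∈ γ.emap e ∧ p ∈ γ.emap e'}

/-- The crossing number of a graph: the minimum number of crossings over all drawings. -/
def crossingNumber (G : SimpleGraph V) : ℕ :=
  sInf {n | ∃ γ : Drawing G, γ.crossings.Finite ∧ γ.crossings.ncard = n}

/-- `G` is `k`-crossing-critical: `cr(G) ≥ k` and `cr(G - e) < k` for every edge `e`. -/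
def CrossingCritical (G : SimpleGraph V) (k : ℕ) : Prop :=
  k ≤ crossingNumber G ∧
    ∀ e ∈ G.edgeSet, crossingNumber (G.deleteEdges {e}) < k

/-- The image of a subgraph under a drawing. -/
def Drawing.image (γ : Drawing G) (H : G.Subgraph) : Set Plane :=
  γ.vmap '' H.verts ∪ ⋃ e ∈ H.edgeSet, γ.emap e

/-- The image of a whole drawing. -/
def Drawing.totalImage (γ : Drawing G) : Set Plane :=
  range γ.vmap ∪ ⋃ e ∈ G.edgeSet, γ.emap e

/-- The union of all bounded complementary components of a set in the plane: for a
Jordan curve this is the open disk bounded by the curve. -/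
def boundedSide (s : Set Plane) : Set Plane :=
  {p | p ∉ s ∧ IsBounded (connectedComponentIn sᶜ p)}

/-- For a Jordan curve, the closed disk bounded by the curve. -/
def closedRegion (s : Set Plane) : Set Plane :=
  s ∪ boundedSide s

/-- A subgraph is a cycle: connected, finite, and every vertex has exactly two
neighbours. -/
def IsCycleSubgraph (H : G.Subgraph) : Prop :=
  H.Connected ∧ H.verts.Finite ∧ ∀ v ∈ H.verts, (H.neighborSet v).ncard = 2

/-- A subgraph is crossing-free in a drawing if none of its edges is crossed by
another edge of `G`. -/
def Drawing.CrossingFree (γ : Drawing G) (H : G.Subgraph) : Prop :=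
  ∀ e ∈ H.edgeSet, ∀ e' ∈ G.edgeSet, e ≠ e' → γ.emap e ∩ γ.emap e' = ∅

/-- A sequence of cycles `C 0, …, C (t-1)` is a nest in `γ`: the cycles are pairwise
edge-disjoint, each is crossing-free in `γ`, and the image of each cycle is contained
in the closed disk bounded by the image of the previous one. -/
def Drawing.IsNest (γ : Drawing G) {t : ℕ} (C : Fin t → G.Subgraph) : Prop :=
  (∀ i, IsCycleSubgraph (C i)) ∧
  (∀ i j, i ≠ j → Disjoint (C i).edgeSet (C j).edgeSet) ∧
  (∀ i, γ.CrossingFree (C i)) ∧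
  (∀ i : ℕ, ∀ h : i + 1 < t,
    γ.image (C ⟨i + 1, h⟩) ⊆ closedRegion (γ.image (C ⟨i, by omega⟩)))

/-- An `s`-nest: a nest such that any two distinct cycles intersect exactly in a fixed
set `X` of `s` vertices. -/
def Drawing.IsSNest (γ : Drawing G) (s : ℕ) {t : ℕ} (C : Fin t → G.Subgraph) : Prop :=
  γ.IsNest C ∧ ∃ X : Set V, X.Finite ∧ X.ncard = s ∧
    ∀ i j, i ≠ j → (C i).verts ∩ (C j).verts = X

/-- A nest `C 0, …, C (t-1)` in `γ` is clean if every crossing of `γ` lies either in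
the open disk bounded by the image of the last cycle or outside the closed disk
bounded by the image of the first cycle. -/
def Drawing.IsCleanNest (γ : Drawing G) {t : ℕ} (C : Fin t → G.Subgraph) : Prop :=
  ∀ h : 0 < t, ∀ p ∈ γ.crossings,
    p ∈ boundedSide (γ.image (C ⟨t - 1, by omega⟩)) ∨
      p ∉ closedRegion (γ.image (C ⟨0, h⟩))

/-- A drawing is generic: no point lies on three distinct edges, and no two adjacent
edges cross. -/
def Drawing.Generic (γ : Drawing G) : Prop :=
  (∀ p : Plane, ∀ e₁ ∈ G.edgeSet, ∀ e₂ ∈ G.edgeSet, ∀ e₃ ∈ G.edgeSet,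
    p ∈ γ.emap e₁ → p ∈ γ.emap e₂ → p ∈ γ.emap e₃ → e₁ = e₂ ∨ e₁ = e₃ ∨ e₂ = e₃) ∧
  (∀ e ∈ G.edgeSet, ∀ e' ∈ G.edgeSet, e ≠ e' → (∃ v : V, v ∈ e ∧ v ∈ e') →
    γ.emap e ∩ γ.emap e' = ∅)

/-- The faces of a (crossing-free) drawing: the connected components of the complement
of its image. -/
def Drawing.faces (γ : Drawing G) : Set (Set Plane) :=
  {F | ∃ x, x ∉ γ.totalImage ∧ F = connectedComponentIn γ.totalImageᶜ x}

/-- The length of (the boundary of) a face: the number of edges of the graph drawn on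
its frontier. -/
def Drawing.faceLength (γ : Drawing G) (F : Set Plane) : ℕ :=
  {e | e ∈ G.edgeSet ∧ γ.emap e ⊆ frontier F}.ncard

/-- A drawing is a plane triangulation if it has no crossings and every face (including
the outer face) is bounded by a triangle of the graph. -/
def Drawing.IsPlaneTriangulation (γ : Drawing G) : Prop :=
  γ.crossings = ∅ ∧
  ∀ F ∈ γ.faces, ∃ T : G.Subgraph, IsCycleSubgraph T ∧ T.verts.ncard = 3 ∧
    frontier F = γ.image T

/-!
The regions bounded by the cycles of a nest shrink from the outside in, and a crossing never
lies on a crossing-free cycle. Cut a nest of size `(k+1)(t-1)+1` into `k+1` windows of `t`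
consecutive cycles, consecutive windows sharing their extreme cycle. A window is spoiled only by
a crossing lying in the closed disk of its first cycle but outside the closed disk of its last
one; these annuli are pairwise disjoint, so the at most `k` crossings spoil at most `k` windows,
and a remaining window is a clean `s`-nest.
-/

lemma closedRegion_subset_of_subset_closedRegion {A B : Set Plane} (h : A ⊆ closedRegion B) :
    closedRegion A ⊆ closedRegion B := by
  rintro p (hpA | ⟨hpA, hbdd⟩)
  · exact h hpA
  by_contra hpB
  have hpB' : p ∉ B := fun hB => hpB (Or.inl hB)
  have hunbdd : ¬ IsBounded (connectedComponentIn Bᶜ p) := fun hb => hpB (Or.inr ⟨hpB', hb⟩)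
  -- The unbounded component of `Bᶜ` at `p` cannot meet `A`, which lies in the closed disk of `B`.
  have hK : connectedComponentIn Bᶜ p ⊆ Aᶜ := by
    intro q hq hqA
    rcases h hqA with hqB | ⟨-, hqbdd⟩
    · exact connectedComponentIn_subset _ _ hq hqB
    · exact hunbdd (connectedComponentIn_eq hq ▸ hqbdd)
  exact hunbdd (hbdd.subset <| isPreconnected_connectedComponentIn.subset_connectedComponentIn
    (mem_connectedComponentIn hpB') hK)

lemma Drawing.notMem_image_of_mem_crossings (γ : Drawing G) {H : G.Subgraph}
    (hH : γ.CrossingFree H) {p : Plane} (hp : p ∈ γ.crossings) : p ∉ γ.image H := by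
  obtain ⟨e, he, e', he', hne, hpe, hpe'⟩ := hp
  rintro (⟨v, -, rfl⟩ | hpH)
  · exact γ.avoid e he v hpe
  obtain ⟨e'', he'', hpe''⟩ := mem_iUnion₂.1 hpH
  by_cases h : e'' = e
  · subst h
    exact (eq_empty_iff_forall_notMem.1 (hH _ he'' e' he' hne)) p ⟨hpe'', hpe'⟩
  · exact (eq_empty_iff_forall_notMem.1 (hH _ he'' e he h)) p ⟨hpe'', hpe⟩

lemma Drawing.mem_boundedSide_of_mem_crossings (γ : Drawing G) {H : G.Subgraph}
    (hH : γ.CrossingFree H) {p : Plane} (hp : p ∈ γ.crossings)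
    (hpH : p ∈ closedRegion (γ.image H)) : p ∈ boundedSide (γ.image H) :=
  hpH.resolve_left (γ.notMem_image_of_mem_crossings hH hp)

lemma exists_window_inter_subset {α : Type*} {R : ℕ → Set α} (hR : Antitone R) {S : Set α}
    (hS : S.Finite) {k : ℕ} (hk : S.ncard ≤ k) (m : ℕ) :
    ∃ j ≤ k, S ∩ R (j * m) ⊆ R (j * m + m) := by
  by_contra! hspoil
  have hwit : ∀ j : Fin (k + 1), ∃ p ∈ S ∩ R (j * m), p ∉ R (j * m + m) :=
    fun j => not_subset.1 (hspoil j (Nat.lt_succ_iff.1 j.isLt))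
  choose p hpS hpR using hwit
  have hinj : Function.Injective p := by
    refine .of_lt_imp_ne fun i j hij hpij => hpR i ?_
    have hle : i * m + m ≤ j * m := by
      simpa [Nat.succ_mul] using Nat.mul_le_mul_right m (Nat.succ_le_of_lt hij)
    exact hpij ▸ hR hle (hpS j).2
  have hcard := Set.ncard_le_ncard (range_subset_iff.2 fun j => (hpS j).1) hS
  rw [ncard_range_of_injective hinj, Nat.card_fin] at hcard
  omega

/-- Indexed by `ℕ` so that windows can be addressed arithmetically; `∅` past the last cycle. -/
def Drawing.nestRegion (γ : Drawing G) {n : ℕ} (C : Fin n → G.Subgraph) (i : ℕ) : Set Plane :=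
  if h : i < n then closedRegion (γ.image (C ⟨i, h⟩)) else ∅

lemma Drawing.nestRegion_of_lt (γ : Drawing G) {n : ℕ} (C : Fin n → G.Subgraph) {i : ℕ}
    (h : i < n) : γ.nestRegion C i = closedRegion (γ.image (C ⟨i, h⟩)) :=
  dif_pos h

lemma Drawing.IsNest.antitone_nestRegion {γ : Drawing G} {n : ℕ} {C : Fin n → G.Subgraph}
    (hC : γ.IsNest C) : Antitone (γ.nestRegion C) := by
  refine antitone_nat_of_succ_le fun i => ?_
  by_cases h : i + 1 < n
  · rw [γ.nestRegion_of_lt C h, γ.nestRegion_of_lt C (by omega)]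
    exact closedRegion_subset_of_subset_closedRegion (hC.2.2.2 i h)
  · simp [Drawing.nestRegion, h]

def window {α : Type*} {n : ℕ} (C : Fin n → α) (a : ℕ) {t : ℕ} (h : a + t ≤ n) : Fin t → α :=
  C ∘ Fin.castLE h ∘ Fin.natAdd a

lemma window_index_injective {n : ℕ} (a : ℕ) {t : ℕ} (h : a + t ≤ n) :
    Function.Injective (Fin.castLE h ∘ Fin.natAdd a) :=
  (Fin.castLE_injective h).comp (Fin.natAdd_injective _ _)

lemma Drawing.IsNest.isNest_window {γ : Drawing G} {n : ℕ} {C : Fin n → G.Subgraph}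
    (hC : γ.IsNest C) (a : ℕ) {t : ℕ} (h : a + t ≤ n) : γ.IsNest (window C a h) := by
  obtain ⟨hcyc, hdisj, hfree, hnest⟩ := hC
  exact ⟨fun i => hcyc _, fun i j hij => hdisj _ _ ((window_index_injective a h).ne hij),
    fun i => hfree _, fun i hi => hnest (a + i) (by omega)⟩

lemma Drawing.IsSNest.isSNest_window {γ : Drawing G} {s n : ℕ} {C : Fin n → G.Subgraph}
    (hC : γ.IsSNest s C) (a : ℕ) {t : ℕ} (h : a + t ≤ n) : γ.IsSNest s (window C a h) := by
  obtain ⟨hnest, X, hXf, hXc, hX⟩ := hC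
  exact ⟨hnest.isNest_window a h, X, hXf, hXc,
    fun i j hij => hX _ _ ((window_index_injective a h).ne hij)⟩

lemma Drawing.IsNest.isCleanNest_window {γ : Drawing G} {n : ℕ} {C : Fin n → G.Subgraph}
    (hC : γ.IsNest C) {a t : ℕ} (h : a + t ≤ n)
    (hclean : γ.crossings ∩ γ.nestRegion C a ⊆ γ.nestRegion C (a + (t - 1))) :
    γ.IsCleanNest (window C a h) := by
  intro ht p hp
  refine or_iff_not_imp_right.2 fun hp₀ => ?_
  have hlast := hclean ⟨hp, by rw [γ.nestRegion_of_lt C (by omega)]; exact not_not.1 hp₀⟩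
  rw [γ.nestRegion_of_lt C (by omega)] at hlast
  exact γ.mem_boundedSide_of_mem_crossings (hC.2.2.1 _) hp hlast

theorem statement4_general {V : Type} {G : SimpleGraph V} (k t : ℕ)
    (s : ℕ) (γ : Drawing G)
    (hfin : γ.crossings.Finite) (hcr : γ.crossings.ncard ≤ k)
    (C : Fin ((k + 1) * (t - 1) + 1) → G.Subgraph) (hC : γ.IsSNest s C) :
    ∃ C' : Fin t → G.Subgraph, γ.IsSNest s C' ∧ γ.IsCleanNest C' := by
  have hnest : γ.IsNest C := hC.1
  obtain ⟨j, hjk, hj⟩ := exists_window_inter_subset hnest.antitone_nestRegion hfin hcr (t - 1)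
  have hfit : j * (t - 1) + t ≤ (k + 1) * (t - 1) + 1 := by
    have := Nat.mul_le_mul_right (t - 1) hjk
    rw [Nat.succ_mul]
    omega
  exact ⟨window C _ hfit, hC.isSNest_window _ hfit, hnest.isCleanNest_window hfit hj⟩

/-- **Lemma 5 of the paper.** Let `k ≥ 0` and `t ≥ 1` be integers, let
`s ∈ {0,1,2}`, and let `γ` be a drawing of a graph `G` with at most `k` crossings
containing an `s`-nest of size `(k+1)(t−1)+1`. Then `γ` has a clean `s`-nest of size
`t`. -/
theorem statement4 {V : Type} {G : SimpleGraph V} (k t : ℕ) (ht : 1 ≤ t)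
    (s : ℕ) (hs : s ∈ ({0, 1, 2} : Set ℕ)) (γ : Drawing G)
    (hfin : γ.crossings.Finite) (hcr : γ.crossings.ncard ≤ k)
    (C : Fin ((k + 1) * (t - 1) + 1) → G.Subgraph) (hC : γ.IsSNest s C) :
    ∃ C' : Fin t → G.Subgraph, γ.IsSNest s C' ∧ γ.IsCleanNest C' :=
  statement4_general k t s γ hfin hcr C hC

end CrossingPaper
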